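/- arXiv:2404.13301 — 2 statements merged into one kernel-verified Lean document; each statement's English description precedes it below -/
import Mathlib

section
/- Let (X, Λ) be a qualified critical point of min ½ tr(XᵀAXC) − tr(BᵀX) over St(n,r), and let σ be the smallest singular value of V_gᵀBC⁻¹. If σ > d_r − d₁, then Λ ⪯ d₁ C and hence X is a global minimizer. -/
open Matrix

section helpers
lemma psd_trace_nonneg {r : ℕ} {P : Matrix (Fin r) (Fin r) ℝ} (hP : P.PosSemidef) :
    0 ≤ P.trace := by
  rw [Matrix.trace]
  refine Finset.sum_nonneg fun i _ => ?_
  simpa [Matrix.diag, dotProduct, Matrix.mulVec, Pi.single_apply] using hP.dotProduct_mulVec_nonneg (Pi.single i 1)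

open scoped MatrixOrder in
lemma psd_trace_mul_nonneg {r : ℕ} {P Q : Matrix (Fin r) (Fin r) ℝ}
    (hP : P.PosSemidef) (hQ : Q.PosSemidef) : 0 ≤ (P * Q).trace := by
  obtain ⟨R, rfl⟩ : ∃ R : Matrix (Fin r) (Fin r) ℝ, Q = Rᴴ * R := by
    have hR := (CFC.sqrt_nonneg Q).posSemidef
    refine ⟨CFC.sqrt Q, ?_⟩
    rw [hR.isHermitian.eq, CFC.sqrt_mul_sqrt_self Q hQ.nonneg]
  rw [← Matrix.mul_assoc, Matrix.trace_mul_cycle]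
  exact psd_trace_nonneg (hP.mul_mul_conjTranspose_same R)

lemma psd_conj {n r : ℕ} {P : Matrix (Fin n) (Fin n) ℝ} (hP : P.PosSemidef)
    (S : Matrix (Fin n) (Fin r) ℝ) : (Sᵀ * P * S).PosSemidef := by
  have := hP.conjTranspose_mul_mul_same S
  rwa [conjTranspose_eq_transpose_of_trivial] at this

lemma psd_tm_self {n r : ℕ} (S : Matrix (Fin n) (Fin r) ℝ) : (Sᵀ * S).PosSemidef := by
  have := Matrix.posSemidef_conjTranspose_mul_self S
  rwa [conjTranspose_eq_transpose_of_trivial] at this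

lemma psd_of_proj {m : ℕ} {P : Matrix (Fin m) (Fin m) ℝ} (h1 : Pᵀ = P) (h2 : P * P = P) :
    P.PosSemidef := by
  have := psd_tm_self P
  rwa [h1, h2] at this

lemma dot_sq {m k : ℕ} (B : Matrix (Fin k) (Fin m) ℝ) (z : Fin m → ℝ) :
    (B *ᵥ z) ⬝ᵥ (B *ᵥ z) = z ⬝ᵥ ((Bᵀ * B) *ᵥ z) := by
  rw [← Matrix.mulVec_mulVec]
  conv_rhs => rw [Matrix.dotProduct_mulVec, Matrix.vecMul_transpose]

lemma exists_eigen_of_not_psd {r : ℕ} {T : Matrix (Fin r) (Fin r) ℝ} (hT : T.IsHermitian) {c : ℝ}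
    (h : ¬(c • (1 : Matrix (Fin r) (Fin r) ℝ) - T).PosSemidef) :
    ∃ (μ : ℝ) (w : Fin r → ℝ), w ≠ 0 ∧ T *ᵥ w = μ • w ∧ c < μ := by
  have hex : ∃ i, c < hT.eigenvalues i := by
    by_contra hc
    push_neg at hc
    apply h
    have h1 : c • (1 : Matrix (Fin r) (Fin r) ℝ) - T =
        (hT.eigenvectorUnitary : Matrix (Fin r) (Fin r) ℝ) *
          diagonal (fun i => c - hT.eigenvalues i) *
          ((hT.eigenvectorUnitary : Matrix (Fin r) (Fin r) ℝ))ᴴ := by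
      have hU : (hT.eigenvectorUnitary : Matrix (Fin r) (Fin r) ℝ) *
          ((hT.eigenvectorUnitary : Matrix (Fin r) (Fin r) ℝ))ᴴ = 1 := by
        rw [← Matrix.star_eq_conjTranspose]
        exact Matrix.mem_unitaryGroup_iff.mp hT.eigenvectorUnitary.2
      have hd : diagonal (fun i => c - hT.eigenvalues i) =
          c • (1 : Matrix (Fin r) (Fin r) ℝ) - diagonal (fun i => hT.eigenvalues i) := by
        ext i j
        by_cases hij : i = j <;> simp [Matrix.diagonal_apply, hij]
      rw [hd, Matrix.mul_sub, Matrix.sub_mul, Matrix.mul_smul, Matrix.mul_one, Matrix.smul_mul, hU]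
      congr 1
      have hsp := hT.spectral_theorem
      have hco : (RCLike.ofReal ∘ hT.eigenvalues : Fin r → ℝ) = hT.eigenvalues := by ext i; simp
      rw [hco] at hsp
      rw [← Matrix.star_eq_conjTranspose]
      conv_lhs => rw [hsp, Unitary.conjStarAlgAut_apply]
    rw [h1]
    exact (Matrix.PosSemidef.diagonal (fun i => by simpa using hc i)).mul_mul_conjTranspose_same _
  obtain ⟨i, hi⟩ := hex
  refine ⟨hT.eigenvalues i, ⇑(hT.eigenvectorBasis i), ?_, hT.mulVec_eigenvectorBasis i, hi⟩
  intro h0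
  have := hT.eigenvectorBasis.toBasis.ne_zero i
  apply this
  simpa using h0

open scoped MatrixOrder in
lemma part1 {r : ℕ} {C Λ : Matrix (Fin r) (Fin r) ℝ} (hC : C.PosDef) (hΛ : Λ.IsSymm)
    (c b : ℝ) (hqual : (b • C - Λ).PosSemidef) (hnot : ¬(c • C - Λ).PosSemidef) :
    ∃ (μ : ℝ) (u : Fin r → ℝ), (C *ᵥ u) ≠ 0 ∧ Λ *ᵥ u = μ • (C *ᵥ u) ∧ c < μ ∧ μ ≤ b := by
  obtain ⟨S, hS, hSS⟩ : ∃ S : Matrix (Fin r) (Fin r) ℝ, S.PosSemidef ∧ S * S = C :=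
    ⟨CFC.sqrt C, (CFC.sqrt_nonneg C).posSemidef, CFC.sqrt_mul_sqrt_self C hC.posSemidef.nonneg⟩
  have hSt : Sᵀ = S := by
    have := hS.isHermitian
    rwa [Matrix.IsHermitian, conjTranspose_eq_transpose_of_trivial] at this
  have hdet : IsUnit S.det := by
    have h1 : S.det * S.det = C.det := by rw [← Matrix.det_mul, hSS]
    have h2 : (0:ℝ) < C.det := hC.det_pos
    refine isUnit_iff_ne_zero.mpr fun h0 => ?_
    rw [h0, mul_zero] at h1; linarith
  have hSinv : S * S⁻¹ = 1 := Matrix.mul_nonsing_inv S hdet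
  have hSinv' : S⁻¹ * S = 1 := Matrix.nonsing_inv_mul S hdet
  have hSit : (S⁻¹)ᵀ = S⁻¹ := by rw [Matrix.transpose_nonsing_inv, hSt]
  set T := S⁻¹ * Λ * S⁻¹ with hTdef
  have hT : T.IsHermitian := by
    rw [Matrix.IsHermitian, conjTranspose_eq_transpose_of_trivial]
    rw [hTdef, Matrix.transpose_mul, Matrix.transpose_mul, hSit, hΛ.eq, Matrix.mul_assoc]
  have key : ∀ a : ℝ, a • (1 : Matrix (Fin r) (Fin r) ℝ) - T = (S⁻¹)ᵀ * (a • C - Λ) * S⁻¹ := by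
    intro a
    rw [hSit, Matrix.mul_sub, Matrix.sub_mul, Matrix.mul_smul, Matrix.smul_mul]
    congr 2
    rw [← hSS, ← Matrix.mul_assoc, hSinv', Matrix.one_mul, hSinv]
  have hTb : (b • (1 : Matrix (Fin r) (Fin r) ℝ) - T).PosSemidef := by
    rw [key b]; exact psd_conj hqual _
  have hTc : ¬(c • (1 : Matrix (Fin r) (Fin r) ℝ) - T).PosSemidef := by
    intro hpsd
    apply hnot
    have h2 := psd_conj hpsd S
    have h3 : Sᵀ * (c • 1 - T) * S = c • C - Λ := by
      rw [hSt, Matrix.mul_sub, Matrix.sub_mul, Matrix.mul_smul, Matrix.mul_one, Matrix.smul_mul,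
        hSS, hTdef]
      congr 2
      rw [← Matrix.mul_assoc, ← Matrix.mul_assoc, hSinv, Matrix.one_mul, Matrix.mul_assoc, hSinv',
        Matrix.mul_one]
    rwa [h3] at h2
  obtain ⟨μ, w, hw0, hww, hcμ⟩ := exists_eigen_of_not_psd hT hTc
  have hwpos : 0 < w ⬝ᵥ w := by
    rcases (dotProduct_self_star_pos_iff (v := w)).mpr hw0 with h
    simpa using h
  have hμb : μ ≤ b := by
    have h0 := hTb.dotProduct_mulVec_nonneg w
    rw [Matrix.sub_mulVec, Matrix.smul_mulVec, Matrix.one_mulVec, hww] at h0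
    simp only [star_trivial, dotProduct_sub, dotProduct_smul, smul_eq_mul] at h0
    nlinarith
  refine ⟨μ, S⁻¹ *ᵥ w, ?_, ?_, hcμ, hμb⟩
  · have hCu : C *ᵥ (S⁻¹ *ᵥ w) = S *ᵥ w := by
      rw [Matrix.mulVec_mulVec, ← hSS, Matrix.mul_assoc, hSinv, Matrix.mul_one]
    rw [hCu]
    intro h0
    apply hw0
    have : S⁻¹ *ᵥ (S *ᵥ w) = 0 := by rw [h0, Matrix.mulVec_zero]
    rwa [Matrix.mulVec_mulVec, hSinv', Matrix.one_mulVec] at this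
  · have hCu : C *ᵥ (S⁻¹ *ᵥ w) = S *ᵥ w := by
      rw [Matrix.mulVec_mulVec, ← hSS, Matrix.mul_assoc, hSinv, Matrix.mul_one]
    rw [hCu, Matrix.mulVec_mulVec]
    have hLS : Λ * S⁻¹ = S * T := by
      rw [hTdef, ← Matrix.mul_assoc, ← Matrix.mul_assoc, hSinv, Matrix.one_mul]
    rw [hLS, ← Matrix.mulVec_mulVec, hww, Matrix.mulVec_smul]

lemma trace_sym {n r : ℕ} {A : Matrix (Fin n) (Fin n) ℝ} (hA : A.IsSymm)
    {C : Matrix (Fin r) (Fin r) ℝ} (hC : C.IsSymm) (X Y : Matrix (Fin n) (Fin r) ℝ) :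
    (Yᵀ * A * X * C).trace = (Xᵀ * A * Y * C).trace := by
  rw [← Matrix.trace_transpose]
  simp only [Matrix.transpose_mul, Matrix.transpose_transpose, hA.eq, hC.eq]
  rw [Matrix.trace_mul_comm]
  simp [Matrix.mul_assoc]

lemma trace_sym2 {n r : ℕ} {Λ : Matrix (Fin r) (Fin r) ℝ} (hΛ : Λ.IsSymm)
    (X Y : Matrix (Fin n) (Fin r) ℝ) :
    (Yᵀ * X * Λ).trace = (Xᵀ * Y * Λ).trace := by
  rw [← Matrix.trace_transpose]
  simp only [Matrix.transpose_mul, Matrix.transpose_transpose, hΛ.eq]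
  rw [Matrix.trace_mul_comm]

lemma part2 {n r : ℕ} {A : Matrix (Fin n) (Fin n) ℝ} {B X Y : Matrix (Fin n) (Fin r) ℝ}
    {C Λ : Matrix (Fin r) (Fin r) ℝ} {c : ℝ}
    (hA : A.IsSymm) (hCs : C.IsSymm) (hΛ : Λ.IsSymm)
    (hX : Xᵀ * X = 1) (hY : Yᵀ * Y = 1)
    (hB : B = A * X * C - X * Λ)
    (hA1 : (A - c • 1).PosSemidef) (hCpsd : C.PosSemidef) (hP : (c • C - Λ).PosSemidef) :
    (1 / 2 : ℝ) * (Xᵀ * A * X * C).trace - (Bᵀ * X).trace ≤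
      (1 / 2 : ℝ) * (Yᵀ * A * Y * C).trace - (Bᵀ * Y).trace := by
  set Z := Y - X with hZdef
  have h1 : 0 ≤ ((Zᵀ * (A - c • 1) * Z) * C).trace :=
    psd_trace_mul_nonneg (psd_conj hA1 Z) hCpsd
  have h2 : 0 ≤ ((Zᵀ * Z) * (c • C - Λ)).trace :=
    psd_trace_mul_nonneg (psd_tm_self Z) hP
  have hZ1 : Zᵀ * A * Z * C = Yᵀ * A * Y * C - Yᵀ * A * X * C - Xᵀ * A * Y * C
      + Xᵀ * A * X * C := by
    simp only [hZdef, Matrix.transpose_sub, Matrix.sub_mul, Matrix.mul_sub]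
    abel
  have hZ2 : Zᵀ * Z * Λ = Yᵀ * Y * Λ - Yᵀ * X * Λ - Xᵀ * Y * Λ + Xᵀ * X * Λ := by
    simp only [hZdef, Matrix.transpose_sub, Matrix.sub_mul, Matrix.mul_sub]
    abel
  have e3 : (Zᵀ * A * Z * C).trace =
      (Yᵀ * A * Y * C).trace - 2 * (Xᵀ * A * Y * C).trace + (Xᵀ * A * X * C).trace := by
    rw [hZ1, Matrix.trace_add, Matrix.trace_sub, Matrix.trace_sub, trace_sym hA hCs X Y]
    ring
  have e4 : (Zᵀ * Z * Λ).trace = 2 * Λ.trace - 2 * (Xᵀ * Y * Λ).trace := by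
    rw [hZ2, hY, hX, Matrix.one_mul, Matrix.trace_add, Matrix.trace_sub, Matrix.trace_sub,
      trace_sym2 hΛ X Y]
    ring
  have e1 : ((Zᵀ * (A - c • 1) * Z) * C).trace =
      (Zᵀ * A * Z * C).trace - c * (Zᵀ * Z * C).trace := by
    have : Zᵀ * (A - c • 1) * Z * C = Zᵀ * A * Z * C - c • (Zᵀ * Z * C) := by
      simp only [Matrix.mul_sub, Matrix.sub_mul, Matrix.mul_smul, Matrix.smul_mul,
        Matrix.mul_one]
    rw [this, Matrix.trace_sub, Matrix.trace_smul, smul_eq_mul]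
  have e2 : ((Zᵀ * Z) * (c • C - Λ)).trace = c * (Zᵀ * Z * C).trace - (Zᵀ * Z * Λ).trace := by
    have : (Zᵀ * Z) * (c • C - Λ) = c • (Zᵀ * Z * C) - Zᵀ * Z * Λ := by
      simp only [Matrix.mul_sub, Matrix.mul_smul]
    rw [this, Matrix.trace_sub, Matrix.trace_smul, smul_eq_mul]
  have e5 : (Bᵀ * Y).trace = (Xᵀ * A * Y * C).trace - (Xᵀ * Y * Λ).trace := by
    have ht : (Bᵀ * Y).trace = (Yᵀ * B).trace := by
      rw [← Matrix.trace_transpose (Bᵀ * Y), Matrix.transpose_mul, Matrix.transpose_transpose]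
    rw [ht, hB]
    simp only [Matrix.mul_sub, ← Matrix.mul_assoc]
    rw [Matrix.trace_sub, trace_sym hA hCs X Y, trace_sym2 hΛ X Y]
  have e6 : (Bᵀ * X).trace = (Xᵀ * A * X * C).trace - Λ.trace := by
    have ht : (Bᵀ * X).trace = (Xᵀ * B).trace := by
      rw [← Matrix.trace_transpose (Bᵀ * X), Matrix.transpose_mul, Matrix.transpose_transpose]
    rw [ht, hB]
    simp only [Matrix.mul_sub, ← Matrix.mul_assoc]
    rw [Matrix.trace_sub, hX, Matrix.one_mul]
  linarith
end helpers

/-- let `(X, Λ)` be a qualified critical point of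
`min ½ tr(XᵀAXC) − tr(BᵀX)` over `St(n,r)`, and `σ` the smallest singular value of
`V_gᵀBC⁻¹`. If `σ > d_r − d₁`, then `Λ ⪯ d₁C` and `X` is a global minimizer. -/
theorem stmt12 {n r : ℕ} (hr0 : 0 < r) (hrn : r ≤ n)
    (A : Matrix (Fin n) (Fin n) ℝ) (hA : A.IsSymm)
    (V : Matrix (Fin n) (Fin n) ℝ) (d : Fin n → ℝ) (hd : Monotone d)
    (hV : Vᵀ * V = 1) (hAV : A = V * Matrix.diagonal d * Vᵀ)
    (B : Matrix (Fin n) (Fin r) ℝ)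
    (C : Matrix (Fin r) (Fin r) ℝ) (hC : C.PosDef)
    (X : Matrix (Fin n) (Fin r) ℝ) (hX : Xᵀ * X = 1)
    (Λ : Matrix (Fin r) (Fin r) ℝ) (hΛsymm : Λ.IsSymm)
    (hstat : A * X * C = B + X * Λ)
    (hqual : (d ⟨r - 1, by omega⟩ • C - Λ).PosSemidef)
    -- `σ` is the smallest singular value of `M = V_gᵀ B C⁻¹`
    (σ : ℝ) (hσ0 : 0 ≤ σ)
    (hσ : ((((V.submatrix id (Fin.castLE hrn))ᵀ * B * C⁻¹)ᵀ *
            ((V.submatrix id (Fin.castLE hrn))ᵀ * B * C⁻¹)) -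
          σ ^ 2 • (1 : Matrix (Fin r) (Fin r) ℝ)).PosSemidef)
    (hσexists : ∃ u : Fin r → ℝ, u ≠ 0 ∧
      (((V.submatrix id (Fin.castLE hrn))ᵀ * B * C⁻¹)ᵀ *
        ((V.submatrix id (Fin.castLE hrn))ᵀ * B * C⁻¹)).mulVec u = (σ ^ 2) • u)
    (hgap : d ⟨r - 1, by omega⟩ - d ⟨0, by omega⟩ < σ) :
    (d ⟨0, by omega⟩ • C - Λ).PosSemidef ∧
      ∀ Y : Matrix (Fin n) (Fin r) ℝ, Yᵀ * Y = 1 →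
        (1 / 2 : ℝ) * (Xᵀ * A * X * C).trace - (Bᵀ * X).trace ≤
          (1 / 2 : ℝ) * (Yᵀ * A * Y * C).trace - (Bᵀ * Y).trace := by
  have hCs : C.IsSymm := by
    have := hC.isHermitian
    rwa [Matrix.IsHermitian, conjTranspose_eq_transpose_of_trivial] at this
  have hB : B = A * X * C - X * Λ := eq_sub_of_add_eq hstat.symm
  have hVV : V * Vᵀ = 1 := mul_eq_one_comm.mp hV
  have hCdet : IsUnit C.det := (Matrix.isUnit_iff_isUnit_det C).mp hC.isUnit
  have hCinv : C⁻¹ * C = 1 := Matrix.nonsing_inv_mul C hCdet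
  have hab : d ⟨0, by omega⟩ ≤ d ⟨r - 1, by omega⟩ := by
    apply hd
    simp [Fin.le_def]
  -- Part 1
  have hP1 : (d ⟨0, by omega⟩ • C - Λ).PosSemidef := by
    by_contra hnot
    obtain ⟨μ, u, hv0, hΛu, haμ, hμb⟩ := part1 hC hΛsymm _ _ hqual hnot
    set Vg := V.submatrix id (Fin.castLE hrn) with hVgdef
    set M := Vgᵀ * B * C⁻¹ with hMdef
    set W := Vgᵀ * X with hWdef
    set v := C *ᵥ u with hvdef
    have hMC : M * C = Vgᵀ * B := by
      rw [hMdef, Matrix.mul_assoc, hCinv, Matrix.mul_one]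
    have hVA : Vᵀ * A = Matrix.diagonal d * Vᵀ := by
      rw [hAV, ← Matrix.mul_assoc, ← Matrix.mul_assoc, hV, Matrix.one_mul]
    have hVgA : Vgᵀ * A = Matrix.diagonal (fun i => d (Fin.castLE hrn i)) * Vgᵀ := by
      ext i j
      have h1 : (Vgᵀ * A) i j = (Vᵀ * A) (Fin.castLE hrn i) j := by
        simp [Matrix.mul_apply, hVgdef]
      rw [h1, hVA]
      simp [Matrix.diagonal_mul, hVgdef]
    have hVgB : Vgᵀ * B = Matrix.diagonal (fun i => d (Fin.castLE hrn i)) * W * C - W * Λ := by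
      rw [hB, Matrix.mul_sub, ← Matrix.mul_assoc, ← Matrix.mul_assoc, hVgA, ← Matrix.mul_assoc,
        Matrix.mul_assoc _ Vgᵀ X, ← hWdef]
    have hMv : M *ᵥ v = (Matrix.diagonal (fun i => d (Fin.castLE hrn i))) *ᵥ (W *ᵥ v)
        - μ • (W *ᵥ v) := by
      have h0 : M *ᵥ v = (M * C) *ᵥ u := by rw [hvdef, Matrix.mulVec_mulVec]
      rw [h0, hMC, hVgB, Matrix.sub_mulVec]
      congr 1
      · rw [← Matrix.mulVec_mulVec, ← Matrix.mulVec_mulVec, ← hvdef]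
      · rw [← Matrix.mulVec_mulVec, hΛu, Matrix.mulVec_smul]
    set y := W *ᵥ v with hydef
    have hMvi : ∀ i, (M *ᵥ v) i = (d (Fin.castLE hrn i) - μ) * y i := by
      intro i
      rw [hMv]
      simp [Matrix.mulVec_diagonal, sub_mul]
    have hbound : ∀ i, ((M *ᵥ v) i)^2 ≤ (d ⟨r - 1, by omega⟩ - d ⟨0, by omega⟩)^2 * (y i)^2 := by
      intro i
      rw [hMvi i, mul_pow]
      have h1 : d ⟨0, by omega⟩ ≤ d (Fin.castLE hrn i) := by
        apply hd; simp [Fin.le_def]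
      have h2 : d (Fin.castLE hrn i) ≤ d ⟨r - 1, by omega⟩ := by
        apply hd
        rw [Fin.le_def]
        have := i.isLt
        simp only [Fin.coe_castLE]
        omega
      have h3 : (d (Fin.castLE hrn i) - μ)^2 ≤ (d ⟨r - 1, by omega⟩ - d ⟨0, by omega⟩)^2 :=
        sq_le_sq' (by linarith) (by linarith)
      exact mul_le_mul_of_nonneg_right h3 (sq_nonneg _)
    have hMv2 : (M *ᵥ v) ⬝ᵥ (M *ᵥ v) ≤
        (d ⟨r - 1, by omega⟩ - d ⟨0, by omega⟩)^2 * (y ⬝ᵥ y) := by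
      simp only [dotProduct, ← sq]
      rw [Finset.mul_sum]
      exact Finset.sum_le_sum fun i _ => hbound i
    have hyv : y ⬝ᵥ y ≤ v ⬝ᵥ v := by
      have hz : (X *ᵥ v) ⬝ᵥ (X *ᵥ v) = v ⬝ᵥ v := by
        rw [dot_sq X v, hX, Matrix.one_mulVec]
      have hyz : y = Vgᵀ *ᵥ (X *ᵥ v) := by
        rw [hydef, hWdef, ← Matrix.mulVec_mulVec]
      have hVgV : Vgᵀ * Vg = 1 := by
        ext i j
        have h1 : (Vgᵀ * Vg) i j = (Vᵀ * V) (Fin.castLE hrn i) (Fin.castLE hrn j) := by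
          simp [Matrix.mul_apply, hVgdef]
        rw [h1, hV]
        simp [Matrix.one_apply, Fin.castLE_inj]
      have hproj : (1 - Vg * Vgᵀ).PosSemidef := by
        apply psd_of_proj
        · rw [Matrix.transpose_sub, Matrix.transpose_one, Matrix.transpose_mul,
            Matrix.transpose_transpose]
        · have hPP : Vg * Vgᵀ * (Vg * Vgᵀ) = Vg * Vgᵀ := by
            rw [← Matrix.mul_assoc, Matrix.mul_assoc Vg Vgᵀ Vg, hVgV, Matrix.mul_one]
          simp only [Matrix.mul_sub, Matrix.sub_mul, Matrix.mul_one, Matrix.one_mul, hPP]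
          abel
      have h0 := hproj.dotProduct_mulVec_nonneg (X *ᵥ v)
      rw [Matrix.sub_mulVec, Matrix.one_mulVec] at h0
      simp only [star_trivial, dotProduct_sub] at h0
      have h1 : y ⬝ᵥ y = (X *ᵥ v) ⬝ᵥ ((Vg * Vgᵀ) *ᵥ (X *ᵥ v)) := by
        rw [hyz, dot_sq Vgᵀ (X *ᵥ v), Matrix.transpose_transpose]
      linarith
    have hvpos : 0 < v ⬝ᵥ v := by
      have h := (dotProduct_self_star_pos_iff (v := v)).mpr hv0
      simpa using h
    have hσv : σ^2 * (v ⬝ᵥ v) ≤ (M *ᵥ v) ⬝ᵥ (M *ᵥ v) := by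
      have h0 := hσ.dotProduct_mulVec_nonneg v
      rw [Matrix.sub_mulVec, Matrix.smul_mulVec, Matrix.one_mulVec] at h0
      simp only [star_trivial, dotProduct_sub, dotProduct_smul, smul_eq_mul] at h0
      have h1 : v ⬝ᵥ ((Mᵀ * M) *ᵥ v) = (M *ᵥ v) ⬝ᵥ (M *ᵥ v) := (dot_sq M v).symm
      linarith
    have hba : 0 ≤ d ⟨r - 1, by omega⟩ - d ⟨0, by omega⟩ := by linarith
    have hsq : (d ⟨r - 1, by omega⟩ - d ⟨0, by omega⟩)^2 < σ^2 := by
      have := pow_lt_pow_left₀ hgap hba (n := 2) (by norm_num)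
      convert this using 2
    have hfin : (d ⟨r - 1, by omega⟩ - d ⟨0, by omega⟩)^2 * (y ⬝ᵥ y) ≤
        (d ⟨r - 1, by omega⟩ - d ⟨0, by omega⟩)^2 * (v ⬝ᵥ v) :=
      mul_le_mul_of_nonneg_left hyv (sq_nonneg _)
    have h5 : σ^2 * (v ⬝ᵥ v) ≤ (d ⟨r - 1, by omega⟩ - d ⟨0, by omega⟩)^2 * (v ⬝ᵥ v) :=
      le_trans hσv (le_trans hMv2 hfin)
    have h6 : (d ⟨r - 1, by omega⟩ - d ⟨0, by omega⟩)^2 * (v ⬝ᵥ v) < σ^2 * (v ⬝ᵥ v) :=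
      mul_lt_mul_of_pos_right hsq hvpos
    linarith
  -- Part 2
  have hA1 : (A - d ⟨0, by omega⟩ • (1 : Matrix (Fin n) (Fin n) ℝ)).PosSemidef := by
    have heq : A - d ⟨0, by omega⟩ • (1 : Matrix (Fin n) (Fin n) ℝ) =
        V * Matrix.diagonal (fun i => d i - d ⟨0, by omega⟩) * Vᵀ := by
      have hdg : Matrix.diagonal (fun i => d i - d ⟨0, by omega⟩) =
          Matrix.diagonal d - d ⟨0, by omega⟩ • (1 : Matrix (Fin n) (Fin n) ℝ) := by
        ext i j
        by_cases hij : i = j <;> simp [Matrix.diagonal_apply, hij]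
      rw [hAV, hdg, Matrix.mul_sub, Matrix.sub_mul, Matrix.mul_smul, Matrix.mul_one,
        Matrix.smul_mul, hVV]
    rw [heq]
    have hpsd : (Matrix.diagonal (fun i => d i - d ⟨0, by omega⟩)).PosSemidef := by
      apply Matrix.PosSemidef.diagonal
      intro i
      have : d ⟨0, by omega⟩ ≤ d i := by
        apply hd
        simp [Fin.le_def]
      simpa using this
    have := psd_conj hpsd Vᵀ
    rwa [Matrix.transpose_transpose] at this
  exact ⟨hP1, fun Y hY => part2 hA hCs hΛsymm hX hY hB hA1 hC.posSemidef hP1⟩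
end

section
/- Let A ∈ ℝʳˣʳ and C ∈ ℝʳ'ˣʳ' both be symmetric positive definite with r ≥ r'. Then every global maximizer X̂ of f(X) = ½ tr(XᵀAXC) − tr(BᵀX) over the set {X ∈ ℝʳˣʳ' : XᵀX ⪯ I_{r'}} satisfies X̂ᵀX̂ = I_{r'}, i.e., lies on St(r,r'). -/
open Matrix

set_option linter.unusedSectionVars false

section helpers
variable {m n p : Type*} [Fintype m] [Fintype n] [Fintype p]

lemma vmv_transpose (u : m → ℝ) (v : n → ℝ) : (vecMulVec u v)ᵀ = vecMulVec v u := by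
  ext i j; simp [vecMulVec_apply, mul_comm]

lemma mul_vmv (M : Matrix p m ℝ) (u : m → ℝ) (v : n → ℝ) :
    M * vecMulVec u v = vecMulVec (M *ᵥ u) v := by
  ext i j
  simp only [mul_apply, vecMulVec_apply, mulVec, dotProduct, Finset.sum_mul]
  exact Finset.sum_congr rfl fun k _ => by ring

lemma vmv_mul (u : m → ℝ) (v : n → ℝ) (M : Matrix n p ℝ) :
    vecMulVec u v * M = vecMulVec u (Mᵀ *ᵥ v) := by
  ext i j
  simp only [mul_apply, vecMulVec_apply, mulVec, dotProduct, transpose_apply, Finset.mul_sum]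
  exact Finset.sum_congr rfl fun k _ => by ring

lemma vmv_smul_right (u : m → ℝ) (a : ℝ) (v : n → ℝ) :
    vecMulVec u (a • v) = a • vecMulVec u v := by
  ext i j; simp [vecMulVec_apply]; ring

lemma vmv_mul_vmv (v : m → ℝ) (u u' : n → ℝ) (v' : p → ℝ) :
    vecMulVec v u * vecMulVec u' v' = (u ⬝ᵥ u') • vecMulVec v v' := by
  ext i j
  simp only [mul_apply, vecMulVec_apply, dotProduct, Matrix.smul_apply, smul_eq_mul]
  rw [Finset.sum_mul]
  exact Finset.sum_congr rfl fun k _ => by ring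

lemma trace_vmv (u : m → ℝ) (v : m → ℝ) : (vecMulVec u v).trace = u ⬝ᵥ v := by
  simp [trace, vecMulVec_apply, dotProduct, diag]

lemma vmv_mulVec (u : m → ℝ) (v : n → ℝ) (x : n → ℝ) :
    vecMulVec u v *ᵥ x = (v ⬝ᵥ x) • u := by
  funext i
  simp only [mulVec, vecMulVec_apply, dotProduct, Pi.smul_apply, smul_eq_mul, Finset.sum_mul]
  exact Finset.sum_congr rfl fun k _ => by ring

end helpers

/-- If `P` is psd with unit eigenvector `v` of eigenvalue `lam`, then `P - t • v vᵀ` is psd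
for `t ≤ lam`. -/
lemma psd_sub_vmv {n : ℕ} {P : Matrix (Fin n) (Fin n) ℝ} (hP : P.PosSemidef)
    {v : Fin n → ℝ} (hv : v ⬝ᵥ v = 1) {lam t : ℝ} (hPv : P *ᵥ v = lam • v) (ht : t ≤ lam) :
    (P - t • vecMulVec v v).PosSemidef := by
  have hPsymm : Pᵀ = P := by
    have := hP.1; rwa [IsHermitian, conjTranspose_eq_transpose_of_trivial] at this
  refine PosSemidef.of_dotProduct_mulVec_nonneg ?_ ?_
  · show _ = _
    rw [conjTranspose_eq_transpose_of_trivial, transpose_sub, transpose_smul, vmv_transpose,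
      hPsymm]
  · intro x
    have hsx : star x = x := star_trivial x
    rw [hsx, sub_mulVec, dotProduct_sub, smul_mulVec, vmv_mulVec, dotProduct_smul,
      dotProduct_smul]
    set α := v ⬝ᵥ x with hα
    set w : Fin n → ℝ := x - α • v with hw
    have hxw : x = α • v + w := by simp [hw]
    have hvw : v ⬝ᵥ w = 0 := by
      simp [hw, dotProduct_sub, dotProduct_smul, hv, hα, smul_eq_mul]
    have hwv : w ⬝ᵥ v = 0 := by rw [dotProduct_comm]; exact hvw
    have hvPw : v ⬝ᵥ (P *ᵥ w) = 0 := by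
      rw [dotProduct_mulVec, ← mulVec_transpose, hPsymm, hPv, smul_dotProduct, hvw, smul_eq_mul,
        mul_zero]
    have hwPv : w ⬝ᵥ (P *ᵥ v) = 0 := by rw [hPv, dotProduct_smul, hwv, smul_eq_mul, mul_zero]
    have hwPw : 0 ≤ w ⬝ᵥ (P *ᵥ w) := by
      have := hP.dotProduct_mulVec_nonneg w; rwa [star_trivial] at this
    have hexp : x ⬝ᵥ (P *ᵥ x) = α ^ 2 * lam + w ⬝ᵥ (P *ᵥ w) := by
      rw [hxw]
      simp only [mulVec_add, mulVec_smul, hPv, add_dotProduct, dotProduct_add, smul_dotProduct,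
        dotProduct_smul, hv, hvPw, hwPv, hvw, hwv, smul_eq_mul]
      ring
    have hxv : x ⬝ᵥ v = α := dotProduct_comm x v
    rw [hexp, hxv, smul_eq_mul, smul_eq_mul]
    nlinarith [sq_nonneg α]

lemma vmv_smul_left {m n : Type*} (u : m → ℝ) (a : ℝ) (v : n → ℝ) :
    vecMulVec (a • u) v = a • vecMulVec u v := by
  ext i j; simp [vecMulVec_apply]; ring

set_option maxHeartbeats 1000000


/-- for `A` (r×r) and `C` (r'×r') symmetric positive definite with `r ≥ r'`,
every global maximizer `X̂` of `f(X) = ½ tr(XᵀAXC) − tr(BᵀX)` over `{X : XᵀX ⪯ I}`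
satisfies `X̂ᵀX̂ = I`, i.e. lies on `St(r,r')`. -/
theorem stmt14 {r r' : ℕ} (hr : r' ≤ r)
    (A : Matrix (Fin r) (Fin r) ℝ) (hA : A.PosDef)
    (C : Matrix (Fin r') (Fin r') ℝ) (hC : C.PosDef)
    (B : Matrix (Fin r) (Fin r') ℝ)
    (X : Matrix (Fin r) (Fin r') ℝ)
    (hXfeas : ((1 : Matrix (Fin r') (Fin r') ℝ) - Xᵀ * X).PosSemidef)
    (hXmax : ∀ Y : Matrix (Fin r) (Fin r') ℝ,
      ((1 : Matrix (Fin r') (Fin r') ℝ) - Yᵀ * Y).PosSemidef →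
      (1 / 2 : ℝ) * (Yᵀ * A * Y * C).trace - (Bᵀ * Y).trace ≤
        (1 / 2 : ℝ) * (Xᵀ * A * X * C).trace - (Bᵀ * X).trace) :
    Xᵀ * X = 1 := by
  by_contra hne
  have hSh : (Xᵀ * X).IsHermitian := by
    have := isHermitian_conjTranspose_mul_self X
    rwa [conjTranspose_eq_transpose_of_trivial] at this
  -- unit eigenvectors
  have hv1 : ∀ i, (hSh.eigenvectorBasis i : Fin r' → ℝ) ⬝ᵥ (hSh.eigenvectorBasis i : Fin r' → ℝ) = 1 := by
    intro i
    have hnorm := hSh.eigenvectorBasis.orthonormal.1 i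
    have h2 : (inner ℝ (hSh.eigenvectorBasis i) (hSh.eigenvectorBasis i) : ℝ) = 1 := by
      rw [real_inner_self_eq_norm_mul_norm, hnorm]; ring
    simp only [PiLp.inner_apply, RCLike.inner_apply, conj_trivial] at h2
    simpa only [dotProduct, mul_comm] using h2
  -- eigenvalues ≤ 1
  have hle : ∀ i, hSh.eigenvalues i ≤ 1 := by
    intro i
    have hvi : (Xᵀ * X) *ᵥ (hSh.eigenvectorBasis i : Fin r' → ℝ)
        = hSh.eigenvalues i • (hSh.eigenvectorBasis i : Fin r' → ℝ) :=
      hSh.mulVec_eigenvectorBasis i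
    have h2 := hXfeas.dotProduct_mulVec_nonneg (hSh.eigenvectorBasis i : Fin r' → ℝ)
    rw [star_trivial, sub_mulVec, one_mulVec, hvi,
      dotProduct_sub, dotProduct_smul, hv1 i, smul_eq_mul, mul_one] at h2
    linarith
  -- some eigenvalue < 1
  have hex : ∃ i, hSh.eigenvalues i < 1 := by
    by_contra hco
    push_neg at hco
    have hall : ∀ i, hSh.eigenvalues i = 1 := fun i => le_antisymm (hle i) (hco i)
    apply hne
    have hst := hSh.spectral_theorem
    have hdiag : diagonal (RCLike.ofReal ∘ hSh.eigenvalues) = (1 : Matrix (Fin r') (Fin r') ℝ) := by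
      have h3 : RCLike.ofReal ∘ hSh.eigenvalues = fun _ => (1 : ℝ) :=
        funext fun j => by simp [hall j]
      rw [h3, diagonal_one]
    rw [hdiag, map_one] at hst
    exact hst
  obtain ⟨i, hμlt⟩ := hex
  set μ : ℝ := hSh.eigenvalues i with hμdef
  set v : Fin r' → ℝ := (hSh.eigenvectorBasis i : Fin r' → ℝ) with hvdef
  have hSv : (Xᵀ * X) *ᵥ v = μ • v := hSh.mulVec_eigenvectorBasis i
  have hvv : v ⬝ᵥ v = 1 := hv1 i
  have hXvXv : (X *ᵥ v) ⬝ᵥ (X *ᵥ v) = μ := by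
    have h4 : v ⬝ᵥ ((Xᵀ * X) *ᵥ v) = (X *ᵥ v) ⬝ᵥ (X *ᵥ v) := by
      rw [← mulVec_mulVec, dotProduct_mulVec v, vecMul_transpose]
    rw [← h4, hSv, dotProduct_smul, hvv, smul_eq_mul, mul_one]
  have hμ0 : 0 ≤ μ := by
    rw [← hXvXv]
    exact Finset.sum_nonneg fun j _ => mul_self_nonneg _
  have hv0 : v ≠ 0 := by
    intro h; rw [h] at hvv; simp at hvv
  -- obtain perturbation direction data
  obtain ⟨u, a, b, hXu, hub, hb0⟩ :
      ∃ (u : Fin r → ℝ) (a b : ℝ), Xᵀ *ᵥ u = a • v ∧ u ⬝ᵥ u = b ∧ 0 < b := by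
    rcases hμ0.lt_or_eq with h0 | h0
    · refine ⟨X *ᵥ v, μ, μ, ?_, hXvXv, h0⟩
      rw [mulVec_mulVec, hSv]
    · have hXv : X *ᵥ v = 0 := by
        rw [← dotProduct_self_eq_zero, hXvXv, ← h0]
      have hkerX : LinearMap.ker X.mulVecLin ≠ ⊥ := by
        intro h
        apply hv0
        have hv' : v ∈ LinearMap.ker X.mulVecLin := by
          simp [LinearMap.mem_ker, mulVecLin_apply, hXv]
        rw [h] at hv'; simpa using hv'
      have hrank : X.rank < r' := by
        have h5 := LinearMap.finrank_range_add_finrank_ker X.mulVecLin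
        have h6 : Module.finrank ℝ (Fin r' → ℝ) = r' := by simp
        have h7 : Module.finrank ℝ (LinearMap.ker X.mulVecLin) ≠ 0 := by
          intro h
          exact hkerX (Submodule.finrank_eq_zero.mp h)
        have h8 : X.rank = Module.finrank ℝ (LinearMap.range X.mulVecLin) := rfl
        omega
      have hkerXT : LinearMap.ker Xᵀ.mulVecLin ≠ ⊥ := by
        intro h
        have h5 := LinearMap.finrank_range_add_finrank_ker Xᵀ.mulVecLin
        have h8 : Module.finrank ℝ (LinearMap.ker Xᵀ.mulVecLin) = 0 := by rw [h]; simp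
        have h9 : Xᵀ.rank = X.rank := Matrix.rank_transpose X
        have h10 : Xᵀ.rank = Module.finrank ℝ (LinearMap.range Xᵀ.mulVecLin) := rfl
        have h6 : Module.finrank ℝ (Fin r → ℝ) = r := by simp
        omega
      obtain ⟨u, hu, hune⟩ := Submodule.exists_mem_ne_zero_of_ne_bot hkerXT
      rw [LinearMap.mem_ker, mulVecLin_apply] at hu
      refine ⟨u, 0, u ⬝ᵥ u, by rw [hu, zero_smul], rfl, ?_⟩
      rcases (Finset.sum_nonneg fun j (_ : j ∈ Finset.univ) => mul_self_nonneg (u j)).lt_or_eq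
        with h' | h'
      · exact h'
      · exact absurd (dotProduct_self_eq_zero.mp h'.symm) hune
  have hu0 : u ≠ 0 := by
    intro h
    have : b = 0 := by rw [← hub, h]; simp
    rw [this] at hb0; exact lt_irrefl 0 hb0
  set D : Matrix (Fin r) (Fin r') ℝ := vecMulVec u v with hD
  have hYTY : ∀ s : ℝ, (X + s • D)ᵀ * (X + s • D)
      = Xᵀ * X + (2 * s * a + s ^ 2 * b) • vecMulVec v v := by
    intro s
    have e1 : Xᵀ * (s • D) = (s * a) • vecMulVec v v := by
      rw [hD, Matrix.mul_smul, mul_vmv, hXu, vmv_smul_left, smul_smul]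
    have e2 : (s • D)ᵀ * X = (s * a) • vecMulVec v v := by
      rw [hD, transpose_smul, vmv_transpose, Matrix.smul_mul, vmv_mul, hXu, vmv_smul_right,
        smul_smul]
    have e3 : (s • D)ᵀ * (s • D) = (s ^ 2 * b) • vecMulVec v v := by
      rw [hD, transpose_smul, vmv_transpose, Matrix.smul_mul, Matrix.mul_smul, vmv_mul_vmv, hub,
        smul_smul, smul_smul]
      congr 1; ring
    rw [transpose_add, Matrix.add_mul, Matrix.mul_add, Matrix.mul_add, e1, e2, e3]
    rw [add_assoc, ← add_smul, ← add_smul]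
    congr 2
    ring
  have hfeas : ∀ s : ℝ, 2 * s * a + s ^ 2 * b ≤ 1 - μ →
      ((1 : Matrix (Fin r') (Fin r') ℝ) - (X + s • D)ᵀ * (X + s • D)).PosSemidef := by
    intro s hs
    rw [hYTY s, ← sub_sub]
    refine psd_sub_vmv hXfeas hvv ?_ hs
    rw [sub_mulVec, one_mulVec, hSv, sub_smul, one_smul]
  have hobj : ∀ s : ℝ, ((X + s • D)ᵀ * A * (X + s • D) * C).trace
      = (Xᵀ * A * X * C).trace
        + s * ((Dᵀ * A * X * C).trace + (Xᵀ * A * D * C).trace)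
        + s ^ 2 * (Dᵀ * A * D * C).trace := by
    intro s
    rw [transpose_add, transpose_smul]
    simp only [Matrix.add_mul, Matrix.mul_add, Matrix.smul_mul, Matrix.mul_smul, trace_add, trace_smul,
      smul_eq_mul, smul_smul]
    ring
  have hlin : ∀ s : ℝ, (Bᵀ * (X + s • D)).trace = (Bᵀ * X).trace + s * (Bᵀ * D).trace := by
    intro s
    simp only [Matrix.mul_add, Matrix.mul_smul, trace_add, trace_smul, smul_eq_mul]
  have hpos : 0 < (Dᵀ * A * D * C).trace := by
    have hAu : 0 < u ⬝ᵥ (A *ᵥ u) := by have := hA.dotProduct_mulVec_pos hu0; rwa [star_trivial] at this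
    have hCv : 0 < v ⬝ᵥ (C *ᵥ v) := by have := hC.dotProduct_mulVec_pos hv0; rwa [star_trivial] at this
    have hAt : Aᵀ = A := by
      have := hA.1; rwa [IsHermitian, conjTranspose_eq_transpose_of_trivial] at this
    have hCt : Cᵀ = C := by
      have := hC.1; rwa [IsHermitian, conjTranspose_eq_transpose_of_trivial] at this
    have e4 : (Dᵀ * A * D * C).trace = ((A *ᵥ u) ⬝ᵥ u) * (v ⬝ᵥ (C *ᵥ v)) := by
      rw [hD, vmv_transpose, vmv_mul, hAt, vmv_mul_vmv, Matrix.smul_mul, vmv_mul, hCt,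
        trace_smul, trace_vmv, smul_eq_mul]
    rw [e4, dotProduct_comm (A *ᵥ u) u]
    exact mul_pos hAu hCv
  set ε : ℝ := min 1 ((1 - μ) / (2 * |a| + b + 1)) with hε
  have hden : 0 < 2 * |a| + b + 1 := by positivity
  have hε0 : 0 < ε := lt_min one_pos (div_pos (by linarith) hden)
  have hε1 : ε ≤ 1 := min_le_left _ _
  have hε2 : ε * (2 * |a| + b + 1) ≤ 1 - μ := by
    have h11 := min_le_right 1 ((1 - μ) / (2 * |a| + b + 1))
    calc ε * (2 * |a| + b + 1)
        ≤ ((1 - μ) / (2 * |a| + b + 1)) * (2 * |a| + b + 1) :=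
          mul_le_mul_of_nonneg_right h11 (le_of_lt hden)
      _ = 1 - μ := by field_simp
  have habs : ∀ s : ℝ, |s| = ε → 2 * s * a + s ^ 2 * b ≤ 1 - μ := by
    intro s hsabs
    have h1 : 2 * s * a ≤ 2 * ε * |a| := by
      have h12 : s * a ≤ |s * a| := le_abs_self _
      rw [abs_mul, hsabs] at h12
      nlinarith [abs_nonneg a]
    have h2 : s ^ 2 * b ≤ ε * b := by
      have h13 : s ^ 2 = ε ^ 2 := by rw [← sq_abs, hsabs]
      have h14 : ε * (ε * b) ≤ 1 * (ε * b) :=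
        mul_le_mul_of_nonneg_right hε1 (mul_nonneg hε0.le hb0.le)
      nlinarith [h14]
    nlinarith
  have hf1 := hXmax (X + ε • D) (hfeas ε (habs ε (abs_of_pos hε0)))
  have hf2 := hXmax (X + (-ε) • D) (hfeas (-ε) (habs (-ε) (by rw [abs_neg, abs_of_pos hε0])))
  rw [hobj ε, hlin ε] at hf1
  rw [hobj (-ε), hlin (-ε)] at hf2
  nlinarith [mul_pos (mul_pos hε0 hε0) hpos]
end
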